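/- For every whole black-white pebbling of the balanced binary tree of height h ≥ 2 that starts with no pebbles, ends with no pebbles, and at some time has a pebble on the root, there is a time t at which the total pebble weight is at least ⌈h/2⌉ + 1. -/

import Mathlib

/-!
Induction on the height `k` of a subtree, for the claim: if the subtree at `v` is empty at times
`s < e` and `v` is covered at some time `a` in between, then at some time in between it carries
`⌈k/2⌉ + 1` pebbles. Each child `u` of `v` is pebbled at `a`, and `u` is covered just before that
pebble is placed (black) or removed (white); this time lies inside the maximal interval around `a`
on which the subtree at `u` is nonempty. If the interval of one child lies inside
that of the other, induction on the inner child plus one pebble in the outer subtree suffices.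
Otherwise the early child `E` also finishes first, and one applies the same analysis to the two
children of the late child `L` around the time `L` is covered: induction on the grandchild that
starts first gains one pebble, which sits on the other grandchild's subtree, on `E`'s subtree, or on
`L` itself (for height 3, the covering time of `L` works directly). Thus two levels of height cost
one pebble.
-/

/-- Number of nodes of the complete d-ary tree of height h (levels 0..h-1). -/
def treeSize (d h : ℕ) : ℕ := ∑ k ∈ Finset.range h, d ^ k

/-- A black-white configuration: each node gets (black, white) ∈ {0,1}². -/
abbrev BWCfg := ℕ → Bool × Bool

/-- j is a child of i in heap indexing of the d-ary tree. -/
def child (d i j : ℕ) : Prop := ∃ k, k < d ∧ j = d * i + 1 + k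

def isLeaf (d n i : ℕ) : Prop := i < n ∧ n ≤ d * i + 1

/-- Pebble weight of node i. -/
def bwpw (c : BWCfg) (i : ℕ) : ℕ :=
  (if (c i).1 then 1 else 0) + (if (c i).2 then 1 else 0)

/-- b(i) + w(i) ≤ 1 for all nodes. -/
def bwValid (c : BWCfg) : Prop := ∀ i, ¬((c i).1 = true ∧ (c i).2 = true)

def bwweight (n : ℕ) (c : BWCfg) : ℕ := ∑ i ∈ Finset.range n, bwpw c i

/-- Every child of i has pebble weight 1. -/
def bwcovered (d : ℕ) (c : BWCfg) (i : ℕ) : Prop := ∀ j, child d i j → bwpw c j = 1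

/-- Legal whole black-white pebbling moves: remove a black pebble; on a node
whose children all have pebble weight 1, set w(i)=0 and/or set b(i)=1, optionally
simultaneously removing black pebbles from any children; place a white pebble
anywhere; place a black pebble on any leaf. -/
def BWMove (d n : ℕ) (c c' : BWCfg) : Prop :=
  (∃ i, c' = Function.update c i (false, (c i).2)) ∨
  (∃ i, i < n ∧ bwcovered d c i ∧ (c' i = (true, false) ∨ c' i = ((c i).1, false)) ∧
    (∀ j, child d i j → (c' j = c j ∨ c' j = (false, (c j).2))) ∧
    (∀ j, j ≠ i → ¬ child d i j → c' j = c j)) ∨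
  (∃ i, i < n ∧ c' = Function.update c i ((c i).1, true)) ∨
  (∃ i, isLeaf d n i ∧ c' = Function.update c i (true, (c i).2))

def BWPebbling (d n T : ℕ) (c : ℕ → BWCfg) : Prop :=
  (∀ t, t ≤ T → bwValid (c t)) ∧ (∀ t, t < T → BWMove d n (c t) (c (t + 1)))

def BWEmpty (c : BWCfg) : Prop := ∀ i, c i = (false, false)

/-- Root-pebbling: starts and ends empty; at some time the root has pebble weight 1. -/
def BWRootPebbling (d n T : ℕ) (c : ℕ → BWCfg) : Prop :=
  BWPebbling d n T c ∧ BWEmpty (c 0) ∧ BWEmpty (c T) ∧ ∃ t, t ≤ T ∧ bwpw (c t) 0 = 1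

open Finset

lemma child_two_iff {i j : ℕ} : child 2 i j ↔ j = 2 * i + 1 ∨ j = 2 * i + 2 := by
  constructor
  · rintro ⟨k, hk, rfl⟩
    omega
  · rintro (rfl | rfl)
    exacts [⟨0, by omega, rfl⟩, ⟨1, by omega, rfl⟩]

lemma child_two_left (i : ℕ) : child 2 i (2 * i + 1) := child_two_iff.2 (.inl rfl)

lemma child_two_right (i : ℕ) : child 2 i (2 * i + 2) := child_two_iff.2 (.inr rfl)

lemma bwpw_pos_iff {cfg : BWCfg} {j : ℕ} :
    0 < bwpw cfg j ↔ (cfg j).1 = true ∨ (cfg j).2 = true := by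
  unfold bwpw
  cases (cfg j).1 <;> cases (cfg j).2 <;> simp

lemma bwpw_eq_zero_iff {cfg : BWCfg} {j : ℕ} :
    bwpw cfg j = 0 ↔ (cfg j).1 = false ∧ (cfg j).2 = false := by
  unfold bwpw
  cases (cfg j).1 <;> cases (cfg j).2 <;> simp

lemma bwpw_eq_zero_of_empty {cfg : BWCfg} (h : BWEmpty cfg) (j : ℕ) : bwpw cfg j = 0 :=
  bwpw_eq_zero_iff.2 (by simp [h j])

namespace BWMove

variable {n u : ℕ} {c₀ c₁ : BWCfg}

lemma covered_of_black_added (hm : BWMove 2 n c₀ c₁) (hu : 2 * u + 1 < n)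
    (h₀ : (c₀ u).1 = false) (h₁ : (c₁ u).1 = true) : bwcovered 2 c₀ u := by
  rcases hm with ⟨i, rfl⟩ | ⟨i, -, hcov, -, hch, hoth⟩ | ⟨i, -, rfl⟩ | ⟨i, hleaf, rfl⟩
  · by_cases hui : u = i <;> simp_all
  · obtain rfl : u = i := by
      by_contra hne
      by_cases hc : child 2 i u
      · rcases hch u hc with h | h <;> simp_all
      · simp_all [hoth u hne hc]
    exact hcov
  · by_cases hui : u = i <;> simp_all
  · have hui : u ≠ i := by rintro rfl; exact absurd hleaf.2 (by omega)
    simp_all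

lemma covered_of_white_removed (hm : BWMove 2 n c₀ c₁)
    (h₀ : (c₀ u).2 = true) (h₁ : (c₁ u).2 = false) : bwcovered 2 c₀ u := by
  rcases hm with ⟨i, rfl⟩ | ⟨i, -, hcov, -, hch, hoth⟩ | ⟨i, -, rfl⟩ | ⟨i, -, rfl⟩
  · by_cases hui : u = i <;> simp_all
  · obtain rfl : u = i := by
      by_contra hne
      by_cases hc : child 2 i u
      · rcases hch u hc with h | h <;> simp_all
      · simp_all [hoth u hne hc]
    exact hcov
  · by_cases hui : u = i <;> simp_all
  · by_cases hui : u = i <;> simp_all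

end BWMove

namespace Nat

variable {P : ℕ → Prop} {a b : ℕ}

lemma exists_last_holds (hab : a ≤ b) (ha : P a) (hb : ¬ P b) :
    ∃ m, a ≤ m ∧ m < b ∧ P m ∧ ∀ r, m < r → r ≤ b → ¬ P r := by
  induction b with
  | zero => exact absurd (Nat.le_zero.1 hab ▸ ha) hb
  | succ b ih =>
    obtain rfl | hab := eq_or_lt_of_le hab
    · exact absurd ha hb
    by_cases hPb : P b
    · exact ⟨b, by omega, by omega, hPb, fun r h₁ h₂ => by rwa [show r = b + 1 by omega]⟩
    · obtain ⟨m, h₁, h₂, hm, hnot⟩ := ih (by omega) hPb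
      refine ⟨m, h₁, by omega, hm, fun r hr₁ hr₂ => ?_⟩
      obtain hr | rfl := lt_or_eq_of_le hr₂
      exacts [hnot r hr₁ (by omega), hb]

lemma exists_first_fails (hab : a ≤ b) (ha : P a) (hb : ¬ P b) :
    ∃ m, a ≤ m ∧ m < b ∧ (∀ r, a ≤ r → r ≤ m → P r) ∧ ¬ P (m + 1) := by
  obtain ⟨d, rfl⟩ := Nat.exists_eq_add_of_le hab
  clear hab
  induction d generalizing a with
  | zero => exact absurd ha hb
  | succ d ih =>
    by_cases hPa : P (a + 1)
    · obtain ⟨m, h₁, h₂, hrun, hm⟩ := ih hPa (by rwa [Nat.add_right_comm])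
      refine ⟨m, by omega, by omega, fun r hr₁ hr₂ => ?_, hm⟩
      obtain rfl | hr₁ := eq_or_lt_of_le hr₁
      exacts [ha, hrun r hr₁ hr₂]
    · exact ⟨a, le_rfl, by omega, fun r h₁ h₂ => by rwa [show r = a by omega], hPa⟩

end Nat

lemma exists_excursion {F : ℕ → ℕ} {s a e : ℕ} (hsa : s ≤ a) (hae : a ≤ e)
    (hs : F s = 0) (he : F e = 0) (ha : 0 < F a) :
    ∃ p q, s ≤ p ∧ p < a ∧ a < q ∧ q ≤ e ∧ F p = 0 ∧ F q = 0 ∧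
      ∀ t, p < t → t < q → 0 < F t := by
  obtain ⟨p, hsp, hpa, hp, hleft⟩ :=
    Nat.exists_last_holds (P := fun t => F t = 0) hsa hs ha.ne'
  obtain ⟨m, ham, hme, hright, hq⟩ :=
    Nat.exists_first_fails (P := fun t => 0 < F t) hae ha (by simp [he])
  refine ⟨p, m + 1, hsp, hpa, by omega, hme, hp, by simpa using hq, fun t h₁ h₂ => ?_⟩
  rcases le_or_gt t a with h | h
  exacts [Nat.pos_of_ne_zero (hleft t h₁ h), hright t h.le (by omega)]

lemma treeSize_zero (d : ℕ) : treeSize d 0 = 0 := rfl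

lemma treeSize_succ (d h : ℕ) : treeSize d (h + 1) = treeSize d h + d ^ h := sum_range_succ _ _

lemma treeSize_two_add_one (h : ℕ) : treeSize 2 h + 1 = 2 ^ h := by
  induction h with
  | zero => rfl
  | succ h ih => rw [treeSize_succ, pow_succ]; omega

def subtreeWeight (cfg : BWCfg) : ℕ → ℕ → ℕ
  | _, 0 => 0
  | v, k + 1 => bwpw cfg v + subtreeWeight cfg (2 * v + 1) k + subtreeWeight cfg (2 * v + 2) k

section subtreeWeight

variable (cfg : BWCfg) {v x y k : ℕ}

lemma subtreeWeight_siblings (hx : child 2 v x) (hy : child 2 v y) (hxy : x ≠ y) :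
    subtreeWeight cfg v (k + 1) = bwpw cfg v + subtreeWeight cfg x k + subtreeWeight cfg y k := by
  rw [child_two_iff] at hx hy
  rcases hx with rfl | rfl <;> rcases hy with rfl | rfl <;> simp_all [subtreeWeight]; omega

lemma bwpw_le_subtreeWeight : bwpw cfg v ≤ subtreeWeight cfg v (k + 1) := by
  simp only [subtreeWeight]
  omega

lemma subtreeWeight_child_le (hx : child 2 v x) :
    subtreeWeight cfg x k ≤ subtreeWeight cfg v (k + 1) := by
  rw [child_two_iff] at hx
  rcases hx with rfl | rfl <;> simp only [subtreeWeight] <;> omega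

variable {cfg} in
lemma bwpw_add_two_le_subtreeWeight (hv : bwcovered 2 cfg v) :
    bwpw cfg v + 2 ≤ subtreeWeight cfg v (k + 2) := by
  have h₁ := bwpw_le_subtreeWeight cfg (v := 2 * v + 1) (k := k)
  have h₂ := bwpw_le_subtreeWeight cfg (v := 2 * v + 2) (k := k)
  rw [hv _ (child_two_left v)] at h₁
  rw [hv _ (child_two_right v)] at h₂
  simp only [subtreeWeight] at *
  omega

lemma subtreeWeight_eq_sum_levels (v k : ℕ) :
    subtreeWeight cfg v k =
      ∑ d ∈ range k, ∑ i ∈ range (2 ^ d), bwpw cfg (2 ^ d * v + treeSize 2 d + i) := by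
  induction k generalizing v with
  | zero => rfl
  | succ k ih =>
    simp only [subtreeWeight, ih, sum_range_succ', pow_succ, mul_two, sum_range_add,
      sum_add_distrib, treeSize_succ]
    simp only [pow_zero, range_one, sum_singleton, treeSize_zero]
    ring_nf

lemma bwweight_treeSize (d h : ℕ) :
    bwweight (treeSize d h) cfg =
      ∑ l ∈ range h, ∑ i ∈ range (d ^ l), bwpw cfg (treeSize d l + i) := by
  induction h with
  | zero => rfl
  | succ h ih => rw [treeSize_succ, bwweight, sum_range_add, ← bwweight, ih, sum_range_succ]

lemma subtreeWeight_root (h : ℕ) : subtreeWeight cfg 0 h = bwweight (treeSize 2 h) cfg := by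
  simp [subtreeWeight_eq_sum_levels, bwweight_treeSize]

end subtreeWeight

/-- The rightmost leaf `2 ^ (k - 1) * (v + 2) - 2` of the height-`k` subtree at `v` is one of the
first `n` nodes. -/
def SubtreeWithin (n v k : ℕ) : Prop := 2 ^ k * (v + 2) ≤ 2 * (n + 1)

lemma SubtreeWithin.child {n v u k : ℕ} (h : SubtreeWithin n v (k + 1)) (hu : child 2 v u) :
    SubtreeWithin n u k := by
  rw [child_two_iff] at hu
  unfold SubtreeWithin at *
  calc 2 ^ k * (u + 2) ≤ 2 ^ k * (2 * (v + 2)) := Nat.mul_le_mul_left _ (by omega)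
    _ = 2 ^ (k + 1) * (v + 2) := by ring
    _ ≤ _ := h

lemma SubtreeWithin.two_mul_add_one_lt {n v k : ℕ} (h : SubtreeWithin n v (k + 2)) :
    2 * v + 1 < n := by
  have : 4 * (v + 2) ≤ 2 ^ (k + 2) * (v + 2) :=
    Nat.mul_le_mul_right _ (by simpa using Nat.pow_le_pow_right two_pos (by omega : 2 ≤ k + 2))
  unfold SubtreeWithin at h
  omega

lemma subtreeWithin_root (h : ℕ) : SubtreeWithin (treeSize 2 h) 0 h := by
  simp [SubtreeWithin, treeSize_two_add_one, mul_comm]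

section Pebbling

variable {n T : ℕ} {c : ℕ → BWCfg}

lemma exists_covered_time (hmv : ∀ t < T, BWMove 2 n (c t) (c (t + 1))) {u s a e : ℕ}
    (hu : 2 * u + 1 < n) (hsa : s ≤ a) (hae : a ≤ e) (heT : e ≤ T)
    (hs : bwpw (c s) u = 0) (he : bwpw (c e) u = 0) (ha : 0 < bwpw (c a) u) :
    ∃ m, s ≤ m ∧ m < e ∧ bwcovered 2 (c m) u ∧
      (∀ t, m < t → t ≤ a → 0 < bwpw (c t) u) ∧ ∀ t, a ≤ t → t ≤ m → 0 < bwpw (c t) u := by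
  rw [bwpw_eq_zero_iff] at hs he
  rcases bwpw_pos_iff.1 ha with hb | hw
  · obtain ⟨m, hsm, hma, hm, hblack⟩ :=
      Nat.exists_last_holds (P := fun t => (c t u).1 = false) hsa hs.1 (by simp [hb])
    have hblack' : ∀ t, m < t → t ≤ a → (c t u).1 = true := fun t h₁ h₂ => by
      simpa using hblack t h₁ h₂
    refine ⟨m, hsm, by omega,
      (hmv m (by omega)).covered_of_black_added hu hm (hblack' _ (by omega) hma),
      fun t h₁ h₂ => bwpw_pos_iff.2 (.inl (hblack' t h₁ h₂)), fun t h₁ h₂ => by omega⟩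
  · obtain ⟨m, ham, hme, hwhite, hm⟩ :=
      Nat.exists_first_fails (P := fun t => (c t u).2 = true) hae hw (by simp [he.2])
    refine ⟨m, by omega, hme,
      (hmv m (by omega)).covered_of_white_removed (hwhite m ham le_rfl) (by simpa using hm),
      fun t h₁ h₂ => by omega, fun t h₁ h₂ => bwpw_pos_iff.2 (.inr (hwhite t h₁ h₂))⟩

/-- `(p, q)` is the maximal interval around time `a` on which the height-`k` subtree at `u` is
nonempty, and within it `u` is covered at time `m` and pebbled throughout `[a, m]`. -/
structure Excursion (c : ℕ → BWCfg) (u k a p m q : ℕ) : Prop where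
  start_lt : p < a
  lt_stop : a < q
  start_lt_cover : p < m
  cover_lt_stop : m < q
  start_eq : subtreeWeight (c p) u k = 0
  stop_eq : subtreeWeight (c q) u k = 0
  pos : ∀ t, p < t → t < q → 0 < subtreeWeight (c t) u k
  covered : bwcovered 2 (c m) u
  pebbled : ∀ t, a ≤ t → t ≤ m → 0 < bwpw (c t) u

lemma exists_excursion_of_covered_parent (hmv : ∀ t < T, BWMove 2 n (c t) (c (t + 1)))
    {w u k s a e : ℕ} (hu : child 2 w u) (hw : SubtreeWithin n w (k + 3))
    (hsa : s ≤ a) (hae : a ≤ e) (heT : e ≤ T) (hs : subtreeWeight (c s) w (k + 3) = 0)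
    (he : subtreeWeight (c e) w (k + 3) = 0) (hcov : bwcovered 2 (c a) w) :
    ∃ p m q, s ≤ p ∧ q ≤ e ∧ Excursion c u (k + 2) a p m q := by
  have hus : subtreeWeight (c s) u (k + 2) = 0 :=
    Nat.eq_zero_of_le_zero ((subtreeWeight_child_le _ hu).trans_eq hs)
  have hue : subtreeWeight (c e) u (k + 2) = 0 :=
    Nat.eq_zero_of_le_zero ((subtreeWeight_child_le _ hu).trans_eq he)
  have hua : bwpw (c a) u = 1 := hcov u hu
  have hpebbled_pos : ∀ t, 0 < bwpw (c t) u → 0 < subtreeWeight (c t) u (k + 2) :=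
    fun t ht => lt_of_lt_of_le ht (bwpw_le_subtreeWeight _)
  obtain ⟨m, hsm, hme, hcovm, hbefore, hafter⟩ := exists_covered_time hmv
    (hw.child hu).two_mul_add_one_lt hsa hae heT
    (Nat.eq_zero_of_le_zero ((bwpw_le_subtreeWeight _).trans_eq hus))
    (Nat.eq_zero_of_le_zero ((bwpw_le_subtreeWeight _).trans_eq hue)) (by omega)
  obtain ⟨p, q, hsp, hpa, haq, hqe, hp, hq, hpos⟩ := exists_excursion
    (F := fun t => subtreeWeight (c t) u (k + 2)) hsa hae hus hue (hpebbled_pos a (by omega))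
  have hpm : p < m := by
    by_contra! hmp
    rcases eq_or_lt_of_le hmp with rfl | hmp
    · have := bwpw_add_two_le_subtreeWeight hcovm (k := k)
      omega
    · exact absurd hp (hpebbled_pos p (hbefore p hmp hpa.le)).ne'
  have hmq : m < q := by
    by_contra! hqm
    exact absurd hq (hpebbled_pos q (hafter q haq.le hqm)).ne'
  exact ⟨p, m, q, hsp, hqe, hpa, haq, hpm, hmq, hp, hq, hpos, hcovm, hafter⟩

end Pebbling

def SubtreeBound (n T : ℕ) (c : ℕ → BWCfg) (k : ℕ) : Prop :=
  ∀ v s a e, SubtreeWithin n v k → s ≤ a → a ≤ e → e ≤ T →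
    subtreeWeight (c s) v k = 0 → subtreeWeight (c e) v k = 0 → bwcovered 2 (c a) v →
    ∃ τ, s < τ ∧ τ < e ∧ (k + 1) / 2 + 1 ≤ subtreeWeight (c τ) v k

section Bound

variable {n T : ℕ} {c : ℕ → BWCfg} {v E L k a pE mE qE pL mL qL : ℕ}

lemma subtreeBound_two : SubtreeBound n T c 2 := by
  intro v s a e _ hsa hae _ hs he hcov
  have h : bwpw (c a) v + 2 ≤ subtreeWeight (c a) v 2 := bwpw_add_two_le_subtreeWeight hcov
  refine ⟨a, lt_of_le_of_ne hsa ?_, lt_of_le_of_ne hae ?_, by omega⟩ <;> rintro rfl <;> omega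

lemma SubtreeBound.exists_parent_ge_of_nested {w x y a' px mx qx py my qy : ℕ}
    (hbound : SubtreeBound n T c k) (hx : child 2 w x) (hy : child 2 w y) (hxy : x ≠ y)
    (hfit : SubtreeWithin n x k) (hqT : qx ≤ T)
    (X : Excursion c x k a px mx qx) (Y : Excursion c y k a' py my qy)
    (hp : py ≤ px) (hq : qx ≤ qy) :
    ∃ τ, px < τ ∧ τ < qx ∧ (k + 1) / 2 + 2 ≤ subtreeWeight (c τ) w (k + 1) := by
  obtain ⟨τ, h₁, h₂, hτ⟩ := hbound x px mx qx hfit X.start_lt_cover.le X.cover_lt_stop.le hqT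
    X.start_eq X.stop_eq X.covered
  have := Y.pos τ (by omega) (by omega)
  have := subtreeWeight_siblings (c τ) hx hy hxy (k := k)
  exact ⟨τ, h₁, h₂, by omega⟩

lemma exists_subtreeWeight_ge_of_staggered_three (hE : child 2 v E) (hL : child 2 v L)
    (hEL : E ≠ L) (XE : Excursion c E 2 a pE mE qE) (XL : Excursion c L 2 a pL mL qL)
    (hp : pE ≤ pL) :
    ∃ τ, pL < τ ∧ τ < qL ∧ 3 ≤ subtreeWeight (c τ) v 3 := by
  refine ⟨mL, XL.start_lt_cover, XL.cover_lt_stop, ?_⟩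
  have hv : subtreeWeight (c mL) v 3 = bwpw (c mL) v + subtreeWeight (c mL) E 2 +
      subtreeWeight (c mL) L 2 := subtreeWeight_siblings (c mL) hE hL hEL
  have hL₂ : bwpw (c mL) L + 2 ≤ subtreeWeight (c mL) L 2 :=
    bwpw_add_two_le_subtreeWeight XL.covered
  have : 0 < subtreeWeight (c mL) E 2 ∨ 0 < bwpw (c mL) L := by
    rcases lt_or_ge mL qE with h | h
    · exact .inl (XE.pos mL (by have := XL.start_lt_cover; omega) h)
    · exact .inr (XL.pebbled mL (by have := XE.lt_stop; omega) le_rfl)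
  omega

lemma SubtreeBound.exists_subtreeWeight_ge_of_staggered_of_le {A B πA nA κA πB nB κB : ℕ}
    (hbound : SubtreeBound n T c (k + 2)) (hE : child 2 v E) (hL : child 2 v L) (hEL : E ≠ L)
    (hA : child 2 L A) (hB : child 2 L B) (hAB : A ≠ B) (hfit : SubtreeWithin n L (k + 3))
    (hκT : κA ≤ T) (XE : Excursion c E (k + 3) a pE mE qE)
    (XL : Excursion c L (k + 3) a pL mL qL) (XA : Excursion c A (k + 2) mL πA nA κA)
    (XB : Excursion c B (k + 2) mL πB nB κB) (hpE : pE ≤ pL) (hpA : pL ≤ πA) (hπ : πA ≤ πB) :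
    ∃ τ, πA < τ ∧ τ < κA ∧ (k + 5) / 2 + 1 ≤ subtreeWeight (c τ) v (k + 4) := by
  rcases le_or_gt κB κA with hκ | hκ
  · obtain ⟨τ, h₁, h₂, hτ⟩ : ∃ τ, πB < τ ∧ τ < κB ∧
        (k + 3) / 2 + 2 ≤ subtreeWeight (c τ) L (k + 3) :=
      hbound.exists_parent_ge_of_nested hB hA hAB.symm (hfit.child hB) (by omega) XB XA hπ hκ
    have : subtreeWeight (c τ) L (k + 3) ≤ subtreeWeight (c τ) v (k + 4) :=
      subtreeWeight_child_le (c τ) hL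
    exact ⟨τ, by omega, by omega, by omega⟩
  obtain ⟨τ, h₁, h₂, hτ⟩ : ∃ τ, πA < τ ∧ τ < κA ∧
      (k + 3) / 2 + 1 ≤ subtreeWeight (c τ) A (k + 2) :=
    hbound A πA nA κA (hfit.child hA) XA.start_lt_cover.le XA.cover_lt_stop.le hκT XA.start_eq
      XA.stop_eq XA.covered
  have hv : subtreeWeight (c τ) v (k + 4) = bwpw (c τ) v + subtreeWeight (c τ) E (k + 3) +
      subtreeWeight (c τ) L (k + 3) := subtreeWeight_siblings (c τ) hE hL hEL
  have hL' : subtreeWeight (c τ) L (k + 3) = bwpw (c τ) L + subtreeWeight (c τ) A (k + 2) +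
      subtreeWeight (c τ) B (k + 2) := subtreeWeight_siblings (c τ) hA hB hAB
  have : 0 < subtreeWeight (c τ) B (k + 2) ∨ 0 < subtreeWeight (c τ) E (k + 3) ∨
      0 < bwpw (c τ) L := by
    rcases lt_or_ge πB τ with hB | hB
    · exact .inl (XB.pos τ hB (by omega))
    rcases lt_or_ge τ qE with hE | hE
    · exact .inr (.inl (XE.pos τ (by omega) hE))
    · exact .inr (.inr (XL.pebbled τ (by have := XE.lt_stop; omega)
        (by have := XB.start_lt; omega)))
  exact ⟨τ, h₁, h₂, by omega⟩

lemma SubtreeBound.exists_subtreeWeight_ge_of_staggered (hbound : SubtreeBound n T c (k + 2))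
    (hmv : ∀ t < T, BWMove 2 n (c t) (c (t + 1))) (hE : child 2 v E) (hL : child 2 v L)
    (hEL : E ≠ L) (hfit : SubtreeWithin n v (k + 4)) (hqT : qL ≤ T)
    (XE : Excursion c E (k + 3) a pE mE qE) (XL : Excursion c L (k + 3) a pL mL qL)
    (hpE : pE ≤ pL) :
    ∃ τ, pL < τ ∧ τ < qL ∧ (k + 5) / 2 + 1 ≤ subtreeWeight (c τ) v (k + 4) := by
  have hfitL := hfit.child hL
  obtain ⟨π₁, n₁, κ₁, hπ₁, hκ₁, X₁⟩ := exists_excursion_of_covered_parent hmv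
    (child_two_left L) hfitL XL.start_lt_cover.le XL.cover_lt_stop.le hqT XL.start_eq
    XL.stop_eq XL.covered
  obtain ⟨π₂, n₂, κ₂, hπ₂, hκ₂, X₂⟩ := exists_excursion_of_covered_parent hmv
    (child_two_right L) hfitL XL.start_lt_cover.le XL.cover_lt_stop.le hqT XL.start_eq
    XL.stop_eq XL.covered
  rcases le_total π₁ π₂ with h | h
  · obtain ⟨τ, h₁, h₂, hτ⟩ := hbound.exists_subtreeWeight_ge_of_staggered_of_le hE hL hEL
      (child_two_left L) (child_two_right L) (by omega) hfitL (by omega) XE XL X₁ X₂ hpE hπ₁ h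
    exact ⟨τ, by omega, by omega, hτ⟩
  · obtain ⟨τ, h₁, h₂, hτ⟩ := hbound.exists_subtreeWeight_ge_of_staggered_of_le hE hL hEL
      (child_two_right L) (child_two_left L) (by omega) hfitL (by omega) XE XL X₂ X₁ hpE hπ₂ h
    exact ⟨τ, by omega, by omega, hτ⟩

lemma exists_subtreeWeight_ge_of_start_le (hmv : ∀ t < T, BWMove 2 n (c t) (c (t + 1)))
    (ih : ∀ j, 2 ≤ j → j < k + 3 → SubtreeBound n T c j)
    (hE : child 2 v E) (hL : child 2 v L) (hEL : E ≠ L) (hfit : SubtreeWithin n v (k + 3))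
    (hqT : qL ≤ T) (XE : Excursion c E (k + 2) a pE mE qE)
    (XL : Excursion c L (k + 2) a pL mL qL) (hpE : pE ≤ pL) :
    ∃ τ, pL < τ ∧ τ < qL ∧ (k + 4) / 2 + 1 ≤ subtreeWeight (c τ) v (k + 3) := by
  by_cases hq : qL ≤ qE
  · obtain ⟨τ, h₁, h₂, hτ⟩ : ∃ τ, pL < τ ∧ τ < qL ∧
        (k + 3) / 2 + 2 ≤ subtreeWeight (c τ) v (k + 3) :=
      (ih (k + 2) (by omega) (by omega)).exists_parent_ge_of_nested hL hE hEL.symm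
        (hfit.child hL) hqT XL XE hpE hq
    exact ⟨τ, h₁, h₂, by omega⟩
  rcases k with _ | k
  · exact exists_subtreeWeight_ge_of_staggered_three hE hL hEL XE XL hpE
  · exact (ih (k + 2) (by omega) (by omega)).exists_subtreeWeight_ge_of_staggered hmv
      hE hL hEL hfit hqT XE XL hpE

lemma subtreeBound_add_three (hmv : ∀ t < T, BWMove 2 n (c t) (c (t + 1)))
    (ih : ∀ j, 2 ≤ j → j < k + 3 → SubtreeBound n T c j) : SubtreeBound n T c (k + 3) := by
  intro v s a e hfit hsa hae heT hs he hcov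
  obtain ⟨p₁, m₁, q₁, hp₁, hq₁, X₁⟩ := exists_excursion_of_covered_parent hmv
    (child_two_left v) hfit hsa hae heT hs he hcov
  obtain ⟨p₂, m₂, q₂, hp₂, hq₂, X₂⟩ := exists_excursion_of_covered_parent hmv
    (child_two_right v) hfit hsa hae heT hs he hcov
  rcases le_total p₁ p₂ with h | h
  · obtain ⟨τ, h₁, h₂, hτ⟩ := exists_subtreeWeight_ge_of_start_le hmv ih (child_two_left v)
      (child_two_right v) (by omega) hfit (by omega) X₁ X₂ h
    exact ⟨τ, by omega, by omega, hτ⟩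
  · obtain ⟨τ, h₁, h₂, hτ⟩ := exists_subtreeWeight_ge_of_start_le hmv ih (child_two_right v)
      (child_two_left v) (by omega) hfit (by omega) X₂ X₁ h
    exact ⟨τ, by omega, by omega, hτ⟩

theorem subtreeBound (hmv : ∀ t < T, BWMove 2 n (c t) (c (t + 1))) (k : ℕ) (hk : 2 ≤ k) :
    SubtreeBound n T c k := by
  induction k using Nat.strong_induction_on with
  | _ k ih =>
    match k, hk with
    | 2, _ => exact subtreeBound_two
    | k + 3, _ => exact subtreeBound_add_three hmv fun j hj hjk => ih j hjk hj

end Bound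

/-- every whole black-white root-pebbling of the binary tree of
height h ≥ 2 uses total pebble weight at least ⌈h/2⌉ + 1 at some time. -/
theorem bw_lower_binary (h : ℕ) (hh : 2 ≤ h) (T : ℕ) (c : ℕ → BWCfg)
    (hp : BWRootPebbling 2 (treeSize 2 h) T c) :
    ∃ t, t ≤ T ∧ (h + 1) / 2 + 1 ≤ bwweight (treeSize 2 h) (c t) := by
  obtain ⟨⟨-, hmv⟩, hempty₀, hemptyT, t₀, ht₀, hroot⟩ := hp
  have hfit := subtreeWithin_root h
  obtain ⟨k, rfl⟩ := Nat.exists_eq_add_of_le' hh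
  obtain ⟨a, -, haT, hcov, -⟩ := exists_covered_time hmv hfit.two_mul_add_one_lt
    (Nat.zero_le t₀) ht₀ le_rfl (bwpw_eq_zero_of_empty hempty₀ 0)
    (bwpw_eq_zero_of_empty hemptyT 0) (by omega)
  have hweight : ∀ t, subtreeWeight (c t) 0 (k + 2) = bwweight (treeSize 2 (k + 2)) (c t) :=
    fun t => subtreeWeight_root _ _
  obtain ⟨τ, -, hτT, hτ⟩ := subtreeBound hmv (k + 2) hh 0 0 a T hfit (Nat.zero_le a) haT.le
    le_rfl (by simp [hweight, bwweight, bwpw_eq_zero_of_empty hempty₀])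
    (by simp [hweight, bwweight, bwpw_eq_zero_of_empty hemptyT]) hcov
  exact ⟨τ, hτT.le, hweight τ ▸ hτ⟩
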